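/- Let X be a finite set with probability measure μ_X, Ω_X a finite set of kernels on X with probability measure ν_X, and let t be a fixed kernel. Define the empirical measure ν_N = (1/N)Σ δ_{t_i} from i.i.d. samples t_i ~ ν_X. For the parameterized GW distance between the empirical pm-net X_{T_N} and the one-parameter pm-net X_t with cost structure from general parameter spaces and p∈[1,∞], q∈[1,∞), GW_C(X_{T_N}, X_t) = inf_{π∈C(μ_X,μ_X)} ( (1/N) Σ_{i=1}^N dis_p(π, t_i, t)^q )^{1/q}, and GW_C(X_{T_N}, X_t) → GW_C(X, X_t) almost surely as N→∞, where GW_C(X, X_t) = inf_π E_{ν_X}[dis_p(π, ·, t)^q]^{1/q}. -/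

import Mathlib

open Finset MeasureTheory

/-- Coupling predicate for finite probability vectors. -/
def IsCoupling {X Y : Type*} [Fintype X] [Fintype Y]
    (μX : X → ℝ) (μY : Y → ℝ) (π : X → Y → ℝ) : Prop :=
  (∀ x y, 0 ≤ π x y) ∧ (∀ x, ∑ y, π x y = μX x) ∧ (∀ y, ∑ x, π x y = μY y)

/-- The `p`-distortion of a coupling with respect to two kernels. -/
noncomputable def dis {X Y : Type*} [Fintype X] [Fintype Y]
    (p : ℝ) (π : X → Y → ℝ) (f : X → X → ℝ) (g : Y → Y → ℝ) : ℝ :=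
  (∑ x, ∑ y, ∑ x', ∑ y', |f x x' - g y y'| ^ p * (π x y * π x' y')) ^ (1 / p)

/-! The empirical cost of a coupling `π` is `∑ₛ c_N(s) · dis_p(π, s, t)^q`, where `c_N(s)` is the
empirical frequency of the kernel `s` among the first `N` samples. By the strong law of large
numbers `c_N(s) → ν{s}` almost surely, simultaneously for the finitely many `s`. Couplings are
bounded by the total mass, so each distortion is bounded on the coupling polytope; hence the costs
converge uniformly in `π`, their infima converge, and so do the `q`-th roots, `x ↦ x^(1/q)` being
continuous and monotone on `[0, ∞)`. -/

open Filter Topology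

theorem IsCoupling.le_sum {X Y : Type*} [Fintype X] [Fintype Y] {μX : X → ℝ} {μY : Y → ℝ}
    {π : X → Y → ℝ} (hπ : IsCoupling μX μY π) (x : X) (y : Y) : π x y ≤ ∑ x, μX x :=
  calc π x y ≤ ∑ y', π x y' := single_le_sum (fun y' _ => hπ.1 x y') (mem_univ y)
    _ ≤ ∑ x', ∑ y', π x' y' :=
      single_le_sum (f := fun x' => ∑ y', π x' y')
        (fun x' _ => sum_nonneg fun y' _ => hπ.1 x' y') (mem_univ x)
    _ = ∑ x, μX x := sum_congr rfl fun x' _ => hπ.2.1 x'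

section Distortion

variable {X Y : Type*} [Fintype X] [Fintype Y] {p : ℝ} {π : X → Y → ℝ}

theorem sum_distortion_nonneg (hπ : ∀ x y, 0 ≤ π x y) (f : X → X → ℝ) (g : Y → Y → ℝ) :
    0 ≤ ∑ x, ∑ y, ∑ x', ∑ y', |f x x' - g y y'| ^ p * (π x y * π x' y') :=
  sum_nonneg fun x _ => sum_nonneg fun y _ => sum_nonneg fun x' _ => sum_nonneg fun y' _ =>
    mul_nonneg (by positivity) (mul_nonneg (hπ x y) (hπ x' y'))

theorem dis_nonneg (hπ : ∀ x y, 0 ≤ π x y) (f : X → X → ℝ) (g : Y → Y → ℝ) :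
    0 ≤ dis p π f g :=
  Real.rpow_nonneg (sum_distortion_nonneg hπ f g) _

theorem dis_le_of_le {m : ℝ} (hp : 0 < p) (hπ₀ : ∀ x y, 0 ≤ π x y) (hπm : ∀ x y, π x y ≤ m)
    (f : X → X → ℝ) (g : Y → Y → ℝ) :
    dis p π f g ≤ (∑ x, ∑ y, ∑ x', ∑ y', |f x x' - g y y'| ^ p * (m * m)) ^ (1 / p) := by
  unfold dis
  gcongr with x _ y _ x' _ y' _
  · exact sum_distortion_nonneg hπ₀ f g
  · exact hπ₀ x' y'
  · exact (hπ₀ x y).trans (hπm x y)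
  · exact hπm x y
  · exact hπm x' y'

theorem exists_abs_dis_rpow_le (μX : X → ℝ) (μY : Y → ℝ) {q : ℝ} (hp : 0 < p) (hq : 0 ≤ q)
    (f : X → X → ℝ) (g : Y → Y → ℝ) :
    ∃ M, ∀ π ∈ {π | IsCoupling μX μY π}, |dis p π f g ^ q| ≤ M :=
  ⟨_, fun _ hπ => by
    rw [abs_of_nonneg (Real.rpow_nonneg (dis_nonneg hπ.1 f g) q)]
    exact Real.rpow_le_rpow (dis_nonneg hπ.1 f g) (dis_le_of_le hp hπ.1 hπ.le_sum f g) hq⟩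

end Distortion

theorem csInf_image_le_csInf_image_add {α : Type*} {K : Set α} {f g : α → ℝ} {ε : ℝ}
    (hK : K.Nonempty) (hf : BddBelow (f '' K)) (h : ∀ x ∈ K, f x ≤ g x + ε) :
    sInf (f '' K) ≤ sInf (g '' K) + ε := by
  rw [← sub_le_iff_le_add]
  refine le_csInf (hK.image g) ?_
  rintro _ ⟨x, hx, rfl⟩
  linarith [csInf_le hf ⟨x, hx, rfl⟩, h x hx]

theorem TendstoUniformlyOn.tendsto_csInf_image {α ι : Type*} {l : Filter ι} {K : Set α}
    {F : ι → α → ℝ} {f : α → ℝ} (h : TendstoUniformlyOn F f l K)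
    (hF : ∀ i, BddBelow (F i '' K)) (hf : BddBelow (f '' K)) :
    Tendsto (fun i => sInf (F i '' K)) l (𝓝 (sInf (f '' K))) := by
  rcases K.eq_empty_or_nonempty with rfl | hK
  · simpa using tendsto_const_nhds
  rw [Metric.tendsto_nhds]
  intro ε hε
  filter_upwards [Metric.tendstoUniformlyOn_iff.1 h (ε / 2) (half_pos hε)] with i hi
  have hclose : ∀ x ∈ K, |F i x - f x| ≤ ε / 2 := fun x hx => by
    rw [← Real.dist_eq, dist_comm]; exact (hi x hx).le
  rw [Real.dist_eq]
  refine (abs_sub_le_iff.2 ⟨?_, ?_⟩).trans_lt (half_lt_self hε) <;> rw [sub_le_iff_le_add']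
  · exact csInf_image_le_csInf_image_add hK (hF i) fun x hx => by
      linarith [(abs_sub_le_iff.1 (hclose x hx)).1]
  · exact csInf_image_le_csInf_image_add hK hf fun x hx => by
      linarith [(abs_sub_le_iff.1 (hclose x hx)).2]

theorem tendstoUniformlyOn_sum_mul {α ι κ : Type*} [Fintype κ] {l : Filter ι} {K : Set α}
    {c : ι → κ → ℝ} {w : κ → ℝ} (hc : ∀ s, Tendsto (c · s) l (𝓝 (w s)))
    {d : κ → α → ℝ} (hd : ∀ s, ∃ M, ∀ x ∈ K, |d s x| ≤ M) :
    TendstoUniformlyOn (fun i x => ∑ s, c i s * d s x) (fun x => ∑ s, w s * d s x) l K := by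
  choose M hM using hd
  have herr : Tendsto (fun i => ∑ s, |c i s - w s| * M s) l (𝓝 0) := by
    simpa using tendsto_finsetSum _ fun s _ =>
      (((hc s).sub_const (w s)).abs.mul_const (M s))
  rw [Metric.tendstoUniformlyOn_iff]
  intro ε hε
  filter_upwards [herr.eventually (gt_mem_nhds hε)] with i hi x hx
  calc dist (∑ s, w s * d s x) (∑ s, c i s * d s x)
      = |∑ s, (c i s - w s) * d s x| := by
        rw [Real.dist_eq, abs_sub_comm, ← sum_sub_distrib]; simp only [sub_mul]
    _ ≤ ∑ s, |c i s - w s| * M s :=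
        (abs_sum_le_sum_abs _ _).trans <| sum_le_sum fun s _ => by
          rw [abs_mul]; exact mul_le_mul_of_nonneg_left (hM s x hx) (abs_nonneg _)
    _ < ε := hi

theorem Real.csInf_image_rpow {S : Set ℝ} (hS : ∀ x ∈ S, 0 ≤ x) {a : ℝ} (ha : 0 < a) :
    sInf ((· ^ a) '' S) = sInf S ^ a := by
  rcases S.eq_empty_or_nonempty with rfl | hne
  · simp [Real.zero_rpow ha.ne']
  exact (MonotoneOn.map_csInf_of_continuousWithinAt
    (Real.continuousAt_rpow_const _ _ (Or.inr ha.le)).continuousWithinAt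
    (fun x hx y _ hxy => Real.rpow_le_rpow (hS x hx) hxy ha.le) hne ⟨0, hS⟩).symm

theorem csInf_setOf_rpow {α : Type*} {C : α → Prop} {f : α → ℝ} (hf : ∀ x, C x → 0 ≤ f x)
    {a : ℝ} (ha : 0 < a) :
    sInf {r : ℝ | ∃ x, C x ∧ r = f x ^ a} = sInf (f '' {x | C x}) ^ a := by
  rw [← Real.csInf_image_rpow (by rintro _ ⟨x, hx, rfl⟩; exact hf x hx) ha, Set.image_image]
  congr 1
  ext r
  simp [eq_comm]

theorem sum_comp_eq_sum_card_mul {ι κ R : Type*} [Fintype κ] [DecidableEq κ]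
    [NonAssocSemiring R] (s : Finset ι) (u : ι → κ) (f : κ → R) :
    ∑ i ∈ s, f (u i) = ∑ k, (#{i ∈ s | u i = k} : R) * f k := by
  rw [← sum_fiberwise' s u f]
  simp only [sum_const, nsmul_eq_mul]

theorem ae_tendsto_empiricalFrequency {Ω Θ : Type*} [Countable Ω] [DecidableEq Ω]
    [MeasurableSpace Ω] [MeasurableSingletonClass Ω] [MeasurableSpace Θ] {P : Measure Θ}
    [IsFiniteMeasure P] {ν : Measure Ω} {U : ℕ → Θ → Ω} (hmeas : ∀ n, Measurable (U n))
    (hindep : Pairwise fun i j => ProbabilityTheory.IndepFun (U i) (U j) P)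
    (hdist : ∀ n, P.map (U n) = ν) :
    ∀ᵐ θ ∂P, ∀ s, Tendsto (fun N : ℕ => (#{i ∈ range N | U i θ = s} : ℝ) / N) atTop
      (𝓝 (ν {s}).toReal) := by
  refine ae_all_iff.2 fun s => ?_
  let hit : Ω → ℝ := ({s} : Set Ω).indicator 1
  have hhit : Measurable hit := measurable_of_countable _
  have hmean : ∫ θ, hit (U 0 θ) ∂P = (ν {s}).toReal := by
    rw [← integral_map (hmeas 0).aemeasurable hhit.aestronglyMeasurable, hdist 0]
    exact integral_indicator_one (measurableSet_singleton s)
  have hint : Integrable (fun θ => hit (U 0 θ)) P :=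
    .of_bound (hhit.comp (hmeas 0)).aestronglyMeasurable 1 (.of_forall fun θ => by
      simp only [hit, Set.indicator_apply]; split_ifs <;> simp)
  filter_upwards [ProbabilityTheory.strong_law_ae_real (fun i θ => hit (U i θ)) hint
    (fun i j hij => (hindep hij).comp hhit hhit)
    (fun i => (ProbabilityTheory.IdentDistrib.mk (hmeas i).aemeasurable (hmeas 0).aemeasurable
      (by rw [hdist, hdist])).comp hhit)] with θ hθ
  rw [hmean] at hθ
  simpa only [hit, Set.indicator_apply, Set.mem_singleton_iff, Pi.one_apply, sum_boole]
    using hθ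

theorem tendstoUniformlyOn_empiricalAverage {α κ : Type*} [Fintype κ] [DecidableEq κ]
    {K : Set α} {u : ℕ → κ} {w : κ → ℝ}
    (hu : ∀ s, Tendsto (fun N : ℕ => (#{i ∈ range N | u i = s} : ℝ) / N) atTop (𝓝 (w s)))
    {d : κ → α → ℝ} (hd : ∀ s, ∃ M, ∀ x ∈ K, |d s x| ≤ M) :
    TendstoUniformlyOn (fun (N : ℕ) x => (1 / N : ℝ) * ∑ i : Fin N, d (u i) x)
      (fun x => ∑ s, w s * d s x) atTop K := by
  have hfreq : (fun (N : ℕ) x => (1 / N : ℝ) * ∑ i : Fin N, d (u i) x) =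
      fun N x => ∑ s, (#{i ∈ range N | u i = s} : ℝ) / N * d s x := by
    ext N x
    rw [Fin.sum_univ_eq_sum_range (fun i => d (u i) x), sum_comp_eq_sum_card_mul _ u (d · x),
      mul_sum]
    congr 1 with s
    ring
  rw [hfreq]
  exact tendstoUniformlyOn_sum_mul hu hd

theorem csInf_uniformWeights_eq {α : Type*} {C : α → Prop} {N : ℕ} (hN : 0 < N)
    (c : Fin N → α → ℝ) (a : ℝ) :
    sInf {r : ℝ | ∃ (x : α) (ξ : Fin N → ℝ), C x ∧ (∀ i, 0 ≤ ξ i) ∧ (∀ i, ξ i = (1 : ℝ) / N) ∧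
        (∑ i, ξ i = 1) ∧ r = (∑ i, c i x * ξ i) ^ a}
      = sInf {r : ℝ | ∃ x, C x ∧ r = ((1 / N : ℝ) * ∑ i, c i x) ^ a} := by
  have hsum : ∀ x, ∑ i, c i x * (1 / N : ℝ) = (1 / N : ℝ) * ∑ i, c i x := fun x => by
    rw [← sum_mul, mul_comm]
  congr 1
  ext r
  constructor
  · rintro ⟨x, ξ, hx, -, hξ, -, rfl⟩
    exact ⟨x, hx, by simp only [hξ, hsum]⟩
  · rintro ⟨x, hx, rfl⟩
    refine ⟨x, fun _ => 1 / N, hx, fun _ => by positivity, fun _ => rfl, ?_, by rw [hsum]⟩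
    simp [hN.ne']

theorem empiricalGW_one_point_convergence_general {X : Type*} [Fintype X]
    (μX : X → ℝ)
    {Ω : Type*} [Fintype Ω] [MeasurableSpace Ω] [MeasurableSingletonClass Ω]
    (ω : Ω → X → X → ℝ) (t : X → X → ℝ)
    (ν : Measure Ω)
    {Θ : Type*} [mΘ : MeasurableSpace Θ] (P : Measure Θ) [IsProbabilityMeasure P]
    (U : ℕ → Θ → Ω) (hmeas : ∀ n, Measurable (U n))
    (hindep : ProbabilityTheory.iIndepFun U P)
    (hdist : ∀ n, P.map (U n) = ν)
    (p q : ℝ) (hp : 1 ≤ p) (hq : 1 ≤ q) :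
    (∀ N : ℕ, 0 < N → ∀ ks : Fin N → Ω,
      sInf {r : ℝ | ∃ (π : X → X → ℝ) (ξ : Fin N → ℝ), IsCoupling μX μX π ∧
          (∀ i, 0 ≤ ξ i) ∧ (∀ i, ξ i = (1 : ℝ) / N) ∧ (∑ i, ξ i = 1) ∧
          r = (∑ i, dis p π (ω (ks i)) t ^ q * ξ i) ^ (1 / q)}
        = sInf {r : ℝ | ∃ π : X → X → ℝ, IsCoupling μX μX π ∧
          r = ((1 / N : ℝ) * ∑ i : Fin N, dis p π (ω (ks i)) t ^ q) ^ (1 / q)}) ∧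
    (∀ᵐ θ ∂P, Filter.Tendsto
      (fun N : ℕ => sInf {r : ℝ | ∃ π : X → X → ℝ, IsCoupling μX μX π ∧
        r = ((1 / N : ℝ) * ∑ i : Fin N, dis p π (ω (U i θ)) t ^ q) ^ (1 / q)})
      Filter.atTop
      (nhds (sInf {r : ℝ | ∃ π : X → X → ℝ, IsCoupling μX μX π ∧
        r = (∑ s : Ω, (ν {s}).toReal * dis p π (ω s) t ^ q) ^ (1 / q)}))) := by
  classical
  refine ⟨fun N hN ks => csInf_uniformWeights_eq hN (fun i π => dis p π (ω (ks i)) t ^ q) _, ?_⟩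
  have hq₀ : 0 < q := zero_lt_one.trans_le hq
  have hcost_nonneg : ∀ s π, IsCoupling μX μX π → 0 ≤ dis p π (ω s) t ^ q :=
    fun s π hπ => Real.rpow_nonneg (dis_nonneg hπ.1 _ _) q
  filter_upwards [ae_tendsto_empiricalFrequency hmeas (fun i j hij => hindep.indepFun hij) hdist]
    with θ hθ
  have hemp_nonneg : ∀ (N : ℕ) π, IsCoupling μX μX π →
      0 ≤ (1 / N : ℝ) * ∑ i : Fin N, dis p π (ω (U i θ)) t ^ q :=
    fun N π hπ => mul_nonneg (by positivity) (sum_nonneg fun i _ => hcost_nonneg _ π hπ)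
  have hpop_nonneg : ∀ π, IsCoupling μX μX π → 0 ≤ ∑ s, (ν {s}).toReal * dis p π (ω s) t ^ q :=
    fun π hπ => sum_nonneg fun s _ => mul_nonneg ENNReal.toReal_nonneg (hcost_nonneg s π hπ)
  have hbdd : ∀ g : (X → X → ℝ) → ℝ, (∀ π, IsCoupling μX μX π → 0 ≤ g π) →
      BddBelow (g '' {π | IsCoupling μX μX π}) :=
    fun g hg => ⟨0, by rintro _ ⟨π, hπ, rfl⟩; exact hg π hπ⟩
  have hinv : 0 < 1 / q := one_div_pos.2 hq₀
  have hlim := ((tendstoUniformlyOn_empiricalAverage hθ fun s =>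
    exists_abs_dis_rpow_le μX μX (zero_lt_one.trans_le hp) hq₀.le (ω s) t).tendsto_csInf_image
      (fun N => hbdd _ (hemp_nonneg N)) (hbdd _ hpop_nonneg)).rpow_const (Or.inr hinv.le)
  convert hlim using 2
  · exact csInf_setOf_rpow (hemp_nonneg _) hinv
  · exact csInf_setOf_rpow hpop_nonneg hinv

/-- For a random measure network model sampled i.i.d. from a distribution `ν` on a finite
set of kernels: (1) the parameterized GW distance between the empirical pm-net `X_{T_N}`
and the one-parameter pm-net `X_t` reduces to an infimum over couplings of the underlying
measure of the empirical average of distortions (since the coupling of parameter measures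
with a point mass is unique), and (2) this empirical quantity converges almost surely to
the parameterized GW distance between the model `X` and `X_t` as `N → ∞`. -/
theorem empiricalGW_one_point_convergence {X : Type*} [Fintype X]
    (μX : X → ℝ) (hμX0 : ∀ x, 0 ≤ μX x) (hμX1 : ∑ x, μX x = 1)
    {Ω : Type*} [Fintype Ω] [MeasurableSpace Ω] [MeasurableSingletonClass Ω]
    (ω : Ω → X → X → ℝ) (t : X → X → ℝ)
    (ν : Measure Ω) [IsProbabilityMeasure ν]
    {Θ : Type*} [mΘ : MeasurableSpace Θ] (P : Measure Θ) [IsProbabilityMeasure P]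
    (U : ℕ → Θ → Ω) (hmeas : ∀ n, Measurable (U n))
    (hindep : ProbabilityTheory.iIndepFun U P)
    (hdist : ∀ n, P.map (U n) = ν)
    (p q : ℝ) (hp : 1 ≤ p) (hq : 1 ≤ q) :
    (∀ N : ℕ, 0 < N → ∀ ks : Fin N → Ω,
      sInf {r : ℝ | ∃ (π : X → X → ℝ) (ξ : Fin N → ℝ), IsCoupling μX μX π ∧
          (∀ i, 0 ≤ ξ i) ∧ (∀ i, ξ i = (1 : ℝ) / N) ∧ (∑ i, ξ i = 1) ∧
          r = (∑ i, dis p π (ω (ks i)) t ^ q * ξ i) ^ (1 / q)}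
        = sInf {r : ℝ | ∃ π : X → X → ℝ, IsCoupling μX μX π ∧
          r = ((1 / N : ℝ) * ∑ i : Fin N, dis p π (ω (ks i)) t ^ q) ^ (1 / q)}) ∧
    (∀ᵐ θ ∂P, Filter.Tendsto
      (fun N : ℕ => sInf {r : ℝ | ∃ π : X → X → ℝ, IsCoupling μX μX π ∧
        r = ((1 / N : ℝ) * ∑ i : Fin N, dis p π (ω (U i θ)) t ^ q) ^ (1 / q)})
      Filter.atTop
      (nhds (sInf {r : ℝ | ∃ π : X → X → ℝ, IsCoupling μX μX π ∧
        r = (∑ s : Ω, (ν {s}).toReal * dis p π (ω s) t ^ q) ^ (1 / q)}))) :=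
  empiricalGW_one_point_convergence_general μX ω t ν (mΘ := mΘ) P U hmeas hindep hdist p q hp hq
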